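/- The energy kernel elements are dipoles: for any vertex x, the pointwise identity Δv_x = δ_x - δ_o holds. -/

import Mathlib

/-!
Test the reproducing property of `v x` against the Dirac mass `δ_y = Pi.single y 1`, which has
finite energy because the row `c y` is summable. On one side this gives `δ_y x - δ_y o`. On the
other side, symmetry of `c` folds the two halves of the energy sum `E(v x, δ_y)` onto the single
row `{y} × V`, where it is `Δ (v x) y`; that row converges absolutely by `|d| ≤ (1 + d²) / 2`
against the finite energy of `v x`.
-/

noncomputable def energyForm {V : Type*} (c : V → V → ℝ) (u v : V → ℝ) : ℝ :=
  (1/2) * ∑' p : V × V, c p.1 p.2 * (u p.1 - u p.2) * (v p.1 - v p.2)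

def FinEnergy {V : Type*} (c : V → V → ℝ) (u : V → ℝ) : Prop :=
  Summable (fun p : V × V => c p.1 p.2 * (u p.1 - u p.2) * (u p.1 - u p.2))

section RowSums

variable {V α : Type*} [DecidableEq V] [AddCommMonoid α] [TopologicalSpace α]

theorem summable_prod_ite_fst_iff (y : V) (g : V → α) :
    Summable (fun p : V × V => if p.1 = y then g p.2 else 0) ↔ Summable g := by
  refine (Prod.mk_right_injective y).summable_iff ?_ |>.symm.trans ?_
  · rintro ⟨a, b⟩ hp
    have ha : a ≠ y := fun h => hp ⟨b, by rw [h]⟩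
    simp [ha]
  · simp [Function.comp_def]

theorem tsum_prod_ite_fst (y : V) (g : V → α) :
    ∑' p : V × V, (if p.1 = y then g p.2 else 0) = ∑' z, g z := by
  refine ((Prod.mk_right_injective y).tsum_eq ?_).symm.trans (by simp)
  rintro ⟨a, b⟩ hp
  by_cases ha : a = y
  · exact ⟨b, by rw [ha]⟩
  · simp [ha] at hp

end RowSums

section EnergyForm

variable {V : Type*} (c : V → V → ℝ)

theorem FinEnergy.summable_row {u : V → ℝ} (hu : FinEnergy c u) {y : V}
    (hnonneg : ∀ z, 0 ≤ c y z) (hrow : Summable (c y)) :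
    Summable (fun z => c y z * (u y - u z)) := by
  have hslice : Summable (fun z => c y z * (u y - u z) * (u y - u z)) :=
    hu.comp_injective (Prod.mk_right_injective y)
  refine Summable.of_norm_bounded ((hrow.add hslice).mul_left (1 / 2)) fun z => ?_
  have hc := hnonneg z
  have hamgm : |u y - u z| ≤ (1 + (u y - u z) * (u y - u z)) / 2 := by
    nlinarith [sq_nonneg (|u y - u z| - 1), sq_abs (u y - u z)]
  rw [Real.norm_eq_abs, abs_mul, abs_of_nonneg hc]
  nlinarith [mul_le_mul_of_nonneg_left hamgm hc]

theorem finEnergy_single [DecidableEq V] (hsymm : ∀ x y, c x y = c y x)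
    (hnonneg : ∀ x y, 0 ≤ c x y) (hrow : ∀ z, Summable (c z)) (y : V) :
    FinEnergy c (Pi.single y 1) := by
  set g : V × V → ℝ := fun p => if p.1 = y then c y p.2 else 0
  have hg : Summable g := (summable_prod_ite_fst_iff y (c y)).mpr (hrow y)
  have hg_swap : Summable (g ∘ Equiv.prodComm V V) := (Equiv.prodComm V V).summable_iff.mpr hg
  refine Summable.of_nonneg_of_le (fun p => ?_) (fun p => ?_) (hg.add hg_swap)
  · rw [mul_assoc]
    exact mul_nonneg (hnonneg _ _) (mul_self_nonneg _)
  · obtain ⟨a, b⟩ := p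
    by_cases ha : a = y <;> by_cases hb : b = y <;>
      simp [g, ha, hb, hnonneg, (hsymm a y).le]

theorem energyForm_eq_tsum_of_symm (hsymm : ∀ x y, c x y = c y x) {u w : V → ℝ}
    (h : Summable fun p : V × V => c p.1 p.2 * (u p.1 - u p.2) * w p.1) :
    energyForm c u w = ∑' p : V × V, c p.1 p.2 * (u p.1 - u p.2) * w p.1 := by
  set A : V × V → ℝ := fun p => c p.1 p.2 * (u p.1 - u p.2) * w p.1
  have hswap : Summable (A ∘ Equiv.prodComm V V) := (Equiv.prodComm V V).summable_iff.mpr h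
  have hsplit : (fun p : V × V => c p.1 p.2 * (u p.1 - u p.2) * (w p.1 - w p.2))
      = fun p => A p + (A ∘ Equiv.prodComm V V) p := by
    funext p
    simp only [A, Function.comp_apply, Equiv.prodComm_apply, Prod.fst_swap, Prod.snd_swap,
      hsymm p.2 p.1]
    ring
  rw [energyForm, hsplit, h.tsum_add hswap, Function.comp_def, (Equiv.prodComm V V).tsum_eq A]
  ring

theorem energyForm_single [DecidableEq V] (hsymm : ∀ x y, c x y = c y x) {u : V → ℝ} {y : V}
    (hrow : Summable fun z => c y z * (u y - u z)) :
    energyForm c u (Pi.single y 1) = ∑' z, c y z * (u y - u z) := by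
  have hfold : (fun p : V × V => c p.1 p.2 * (u p.1 - u p.2) * (Pi.single y 1 : V → ℝ) p.1)
      = fun p => if p.1 = y then c y p.2 * (u y - u p.2) else 0 := by
    funext p
    by_cases h : p.1 = y <;> simp [h]
  have hsum := (summable_prod_ite_fst_iff y _).mpr hrow
  rw [energyForm_eq_tsum_of_symm c hsymm (hfold ▸ hsum), hfold]
  exact tsum_prod_ite_fst y fun z => c y z * (u y - u z)

end EnergyForm

theorem energy_kernel_dipole {V : Type*} [DecidableEq V] (c : V → V → ℝ)
    (hsymm : ∀ x y, c x y = c y x) (hnonneg : ∀ x y, 0 ≤ c x y)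
    (hrow : ∀ z, Summable (c z))
    (o : V) (v : V → V → ℝ)
    (hfinv : ∀ z, FinEnergy c (v z))
    (hrep : ∀ (z : V) (u : V → ℝ), FinEnergy c u → energyForm c (v z) u = u z - u o)
    (x : V) :
    ∀ y : V, (∑' z, c y z * (v x y - v x z))
      = (if y = x then (1:ℝ) else 0) - (if y = o then (1:ℝ) else 0) := by
  intro y
  have hlap : energyForm c (v x) (Pi.single y 1) = ∑' z, c y z * (v x y - v x z) :=
    energyForm_single c hsymm ((hfinv x).summable_row c (hnonneg y) (hrow y))
  rw [← hlap, hrep x _ (finEnergy_single c hsymm hnonneg hrow y)]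
  simp only [Pi.single_apply, eq_comm]
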